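/- Let ζ₃ = e^{2πi/3}, Λ = ℤ[ζ₃] ⊆ ℂ, E = ℂ/Λ, and let μ : E → E be the map induced by multiplication by ζ₃. Define α, β : E³ → E³ by α(z₁, z₂, z₃) = (μ(z₁), μ(z₂), z₃) and β(z₁, z₂, z₃) = (z₁, z₂, μ(z₃)). Let K be a subgroup of E³ such that α(K) ⊆ K, β(K) ⊆ K, and K contains no non-zero element of the form (x, y, 0) and no non-zero element of the form (0, 0, z). Then every element (t₁, t₂, t₃) ∈ K satisfies μ(tᵢ) = tᵢ for i = 1, 2, 3. -/
import Mathlib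


/-- The primitive third root of unity `ζ₃ = e^{2πi/3}`. -/
noncomputable def zeta3 : ℂ := Complex.exp (2 * Real.pi * Complex.I / 3)

lemma zeta3_prim : IsPrimitiveRoot zeta3 3 := by
  simpa [zeta3] using Complex.isPrimitiveRoot_exp 3 (by norm_num)

lemma zeta3_sq : zeta3 ^ 2 = -1 - zeta3 := by
  have hp := zeta3_prim
  have h3 : zeta3 ^ 3 = 1 := hp.pow_eq_one
  have hne : zeta3 ≠ 1 := hp.ne_one (by norm_num)
  have h : (zeta3 - 1) * (zeta3 ^ 2 + zeta3 + 1) = 0 := by linear_combination h3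
  rcases mul_eq_zero.mp h with h' | h'
  · exact absurd (sub_eq_zero.mp h') hne
  · linear_combination h'

/-- The lattice of Eisenstein integers `Λ = ℤ[ζ₃] = {m + nζ₃ : m, n ∈ ℤ}` as an
additive subgroup of `ℂ`. -/
noncomputable def EisLattice : AddSubgroup ℂ where
  carrier := {z : ℂ | ∃ m n : ℤ, z = (m : ℂ) + (n : ℂ) * zeta3}
  zero_mem' := ⟨0, 0, by simp⟩
  add_mem' := by
    rintro a b ⟨m, n, rfl⟩ ⟨m', n', rfl⟩
    exact ⟨m + m', n + n', by push_cast; ring⟩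
  neg_mem' := by
    rintro a ⟨m, n, rfl⟩
    exact ⟨-m, -n, by push_cast; ring⟩

lemma mul_zeta3_mem {z : ℂ} (hz : z ∈ EisLattice) : zeta3 * z ∈ EisLattice := by
  obtain ⟨m, n, rfl⟩ := hz
  exact ⟨-n, m - n, by push_cast; linear_combination (n : ℂ) * zeta3_sq⟩

/-- The Fermat elliptic curve `E = ℂ/ℤ[ζ₃]`. -/
noncomputable abbrev FermatE := ℂ ⧸ EisLattice

/-- The map `μ : E → E` induced by multiplication by `ζ₃`. -/
noncomputable def muZeta3 : FermatE →+ FermatE :=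
  QuotientAddGroup.map EisLattice EisLattice (AddMonoidHom.mulLeft zeta3)
    (fun _ hz => mul_zeta3_mem hz)

/-- The map `α(z₁,z₂,z₃) = (μ(z₁), μ(z₂), z₃)` on `E³`. -/
noncomputable def alphaMap (p : FermatE × FermatE × FermatE) : FermatE × FermatE × FermatE :=
  (muZeta3 p.1, muZeta3 p.2.1, p.2.2)

/-- The map `β(z₁,z₂,z₃) = (z₁, z₂, μ(z₃))` on `E³`. -/
noncomputable def betaMap (p : FermatE × FermatE × FermatE) : FermatE × FermatE × FermatE :=
  (p.1, p.2.1, muZeta3 p.2.2)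

/-- A subgroup `K ⊆ E³` stable under `α` and `β` containing no
non-zero element of the form `(x,y,0)` or `(0,0,z)` lies in `Fix_{ζ₃}(E)³`. -/
theorem rigid_torus_quotient_stmt16
    (K : AddSubgroup (FermatE × FermatE × FermatE))
    (hα : ∀ p ∈ K, alphaMap p ∈ K)
    (hβ : ∀ p ∈ K, betaMap p ∈ K)
    (hxy0 : ∀ p ∈ K, p.2.2 = 0 → p = 0)
    (h00z : ∀ p ∈ K, p.1 = 0 → p.2.1 = 0 → p = 0) :
    ∀ p ∈ K, muZeta3 p.1 = p.1 ∧ muZeta3 p.2.1 = p.2.1 ∧ muZeta3 p.2.2 = p.2.2 := by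
  intro p hp
  have hr : alphaMap p - p ∈ K := K.sub_mem (hα p hp) hp
  have hq : betaMap p - p ∈ K := K.sub_mem (hβ p hp) hp
  have h1 : alphaMap p - p = 0 := by
    apply hxy0 _ hr
    simp [alphaMap, Prod.sub_def]
  have h2 : betaMap p - p = 0 := by
    apply h00z _ hq <;> simp [betaMap, Prod.sub_def]
  have e1 := congrArg Prod.fst h1
  have e2 := congrArg (fun x => x.2.1) h1
  have e3 := congrArg (fun x => x.2.2) h2
  simp [alphaMap, betaMap, Prod.sub_def, sub_eq_zero] at e1 e2 e3
  exact ⟨e1, e2, e3⟩
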